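/- arXiv:2109.05573 — 3 statements merged into one kernel-verified Lean document; each statement's English description precedes it below -/
import Mathlib

section
/- The cost difference between the schedule (A then B) and the schedule (B then A), where A and B are contiguous blocks of jobs, equals (Σ_{j∈A} w_j)(Σ_{j∈B} P_j) − (Σ_{j∈B} w_j)(Σ_{j∈A} P_j), up to sign. -/
open Finset

theorem stmt_5_general (n k : ℕ) (P w : ℕ → ℝ) :
    -- cost of A then B minus cost of B then A
    (((∑ i ∈ Icc 1 k, w i * ∑ j ∈ Icc 1 i, P j) +
        ∑ i ∈ Icc (k + 1) n, w i * ((∑ j ∈ Icc 1 k, P j) + ∑ j ∈ Icc (k + 1) i, P j))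
      -
    ((∑ i ∈ Icc (k + 1) n, w i * ∑ j ∈ Icc (k + 1) i, P j) +
        ∑ i ∈ Icc 1 k, w i * ((∑ j ∈ Icc (k + 1) n, P j) + ∑ j ∈ Icc 1 i, P j)))
      =
    (∑ j ∈ Icc (k + 1) n, w j) * (∑ j ∈ Icc 1 k, P j) -
      (∑ j ∈ Icc 1 k, w j) * (∑ j ∈ Icc (k + 1) n, P j) := by
  simp only [mul_add, sum_add_distrib, ← sum_mul]
  ring

/-- The cost difference between schedule (A then B) and schedule (B then A),
where `A = (1,…,k)` and `B = (k+1,…,n)` are contiguous blocks of jobs with fixed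
internal order, equals `(Σ_{j∈B} w j)(Σ_{j∈A} P j) − (Σ_{j∈A} w j)(Σ_{j∈B} P j)`
(i.e. the stated quantity up to sign). -/
theorem stmt_5 (n k : ℕ) (hk : 1 ≤ k) (hkn : k < n) (P w : ℕ → ℝ)
    (hP : ∀ j ∈ Icc 1 n, 0 < P j) (hw : ∀ j ∈ Icc 1 n, 0 < w j) :
    -- cost of A then B minus cost of B then A
    (((∑ i ∈ Icc 1 k, w i * ∑ j ∈ Icc 1 i, P j) +
        ∑ i ∈ Icc (k + 1) n, w i * ((∑ j ∈ Icc 1 k, P j) + ∑ j ∈ Icc (k + 1) i, P j))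
      -
    ((∑ i ∈ Icc (k + 1) n, w i * ∑ j ∈ Icc (k + 1) i, P j) +
        ∑ i ∈ Icc 1 k, w i * ((∑ j ∈ Icc (k + 1) n, P j) + ∑ j ∈ Icc 1 i, P j)))
      =
    (∑ j ∈ Icc (k + 1) n, w j) * (∑ j ∈ Icc 1 k, P j) -
      (∑ j ∈ Icc 1 k, w j) * (∑ j ∈ Icc (k + 1) n, P j) :=
  stmt_5_general n k P w
end

section
/- In the sequence produced by repeatedly appending, from the chain of maximum ρ-factor, its prefix up to the ρ-determining job, every chain's internal order is preserved: if job i precedes job j within a chain, then i appears before j in the output sequence. -/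
/-!
Each step splits the chosen chain `c` as `c.take m ++ c.drop m`, emits `c.take m` and leaves the
suffix `c.drop m` in place of `c`. So, by induction on the fuel, every chain still present is a
sublist of the remaining output. A fuel equal to the total number of jobs suffices because every
step with some nonempty chain left removes at least one job.
-/

/-- One generic run of the resequencing algorithm with `fuel` iterations:
at each step, the selection function `pick` chooses a chain index and a prefix
length; that prefix is removed from the chain and appended to the output.
(In Algorithm 1, `pick` selects the chain of maximum ρ-factor and the prefix up
to its ρ-determining job.) -/
def runAlg {α : Type*} (pick : List (List α) → ℕ × ℕ) : ℕ → List (List α) → List α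
  | 0, _ => []
  | fuel + 1, cs =>
    if cs.all (·.isEmpty) then []
    else
      let im := pick cs
      let c := cs.getD im.1 []
      c.take im.2 ++ runAlg pick fuel (cs.set im.1 (c.drop im.2))

namespace List

variable {α : Type*}

theorem eq_getD_or_mem_set {l : List α} {a : α} (ha : a ∈ l) (i : ℕ) (b d : α) :
    a = l.getD i d ∨ a ∈ l.set i b := by
  obtain ⟨j, hj, rfl⟩ := mem_iff_getElem.mp ha
  by_cases hji : j = i
  · subst hji
    exact .inl (getD_eq_getElem l d hj).symm
  · exact .inr (mem_iff_getElem.mpr ⟨j, by simpa using hj, getElem_set_ne (Ne.symm hji) _⟩)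

theorem length_flatten_set_add {L : List (List α)} {i : ℕ} (hi : i < L.length) (x : List α) :
    (L.set i x).flatten.length + (L.getD i []).length = L.flatten.length + x.length := by
  induction L generalizing i with
  | nil => simp at hi
  | cons c L ih =>
    cases i with
    | zero => simp only [set_cons_zero, flatten_cons, length_append, getD_cons_zero]; omega
    | succ i =>
      have := ih (Nat.lt_of_succ_lt_succ hi)
      simp only [set_cons_succ, flatten_cons, length_append, getD_cons_succ]
      omega

theorem length_flatten_set_drop_lt {L : List (List α)} {i m : ℕ} (hi : i < L.length)
    (hm : 1 ≤ m) (hle : m ≤ (L.getD i []).length) :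
    (L.set i ((L.getD i []).drop m)).flatten.length < L.flatten.length := by
  have := length_flatten_set_add hi ((L.getD i []).drop m)
  rw [length_drop] at this
  omega

end List

open List

section runAlg

variable {α : Type*} (pick : List (List α) → ℕ × ℕ)

def ValidPick : Prop :=
  ∀ cs : List (List α), ¬ cs.all (·.isEmpty) →
    (pick cs).1 < cs.length ∧ 1 ≤ (pick cs).2 ∧ (pick cs).2 ≤ (cs.getD (pick cs).1 []).length

theorem runAlg_succ_of_not_all_isEmpty {cs : List (List α)} (h : ¬ cs.all (·.isEmpty))
    (fuel : ℕ) :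
    runAlg pick (fuel + 1) cs = (cs.getD (pick cs).1 []).take (pick cs).2 ++
      runAlg pick fuel (cs.set (pick cs).1 ((cs.getD (pick cs).1 []).drop (pick cs).2)) := by
  rw [runAlg, if_neg h]

theorem sublist_runAlg {pick} (hpick : ValidPick pick) {fuel : ℕ} {cs : List (List α)}
    (hfuel : cs.flatten.length ≤ fuel) {c : List α} (hc : c ∈ cs) :
    c <+ runAlg pick fuel cs := by
  induction fuel generalizing cs c with
  | zero =>
    have : c = [] := flatten_eq_nil_iff.mp (length_eq_zero_iff.mp (Nat.le_zero.mp hfuel)) c hc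
    simp [this]
  | succ n ih =>
    by_cases hall : cs.all (·.isEmpty)
    · have : c = [] := isEmpty_iff.mp (all_eq_true.mp hall c hc)
      simp [this]
    obtain ⟨hi, hm, hle⟩ := hpick cs hall
    rw [runAlg_succ_of_not_all_isEmpty pick hall]
    have hrest := length_flatten_set_drop_lt hi hm hle
    rcases eq_getD_or_mem_set hc (pick cs).1 ((cs.getD (pick cs).1 []).drop (pick cs).2) []
      with rfl | hc'
    · calc cs.getD (pick cs).1 []
          = _ ++ _ := (take_append_drop (pick cs).2 _).symm
        _ <+ _ := (Sublist.refl _).append (ih (by omega) (mem_set hi _))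
    · exact (ih (by omega) hc').trans (sublist_append_right _ _)

end runAlg

/-- In the sequence produced by repeatedly removing a prefix of some chain and
appending it to the output, every chain's internal order is preserved: each
chain occurs as a subsequence of the output, i.e. if job `i` precedes job `j`
within a chain then `i` appears before `j` in the output sequence. -/
theorem stmt_13 {α : Type*} (chains : List (List α))
    (pick : List (List α) → ℕ × ℕ)
    (hpick : ∀ cs : List (List α), ¬ cs.all (·.isEmpty) →
      (pick cs).1 < cs.length ∧ 1 ≤ (pick cs).2 ∧
        (pick cs).2 ≤ (cs.getD (pick cs).1 []).length) :
    ∀ c ∈ chains, c.Sublist (runAlg pick chains.flatten.length chains) :=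
  fun _ hc => sublist_runAlg hpick le_rfl hc
end

section
/- For a chain 1 → ... → k with ρ-factor determined by job a*, splitting the prefix (1,...,a*) by interleaving a block B of jobs from another chain with block ratio ρ_B strictly less than ρ between positions a and a+1 (with 1 ≤ a < a*) yields a total weighted completion time strictly greater than processing the prefix (1,...,a*) contiguously before B. -/
open Finset

/-!
Splitting the prefix at `a` writes it as blocks `A = (1,…,a)` and `C = (a+1,…,a*)`; the two
schedules differ only by the order of the adjacent blocks `C` and `B`, and moving `B` in front
of `C` changes the cost by `w(C) P(B) - w(B) P(C)`. Since the prefix ratio of `a*` dominates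
that of `a`, the ratio of `C` is at least `ρ`, hence larger than the ratio of `B`, so this
change is positive.
-/

theorem sum_Icc_one_add_sum_Icc_succ {M : Type*} [AddCommMonoid M] (f : ℕ → M) {a b : ℕ}
    (hab : a ≤ b) :
    ∑ j ∈ Icc 1 a, f j + ∑ j ∈ Icc (a + 1) b, f j = ∑ j ∈ Icc 1 b, f j := by
  simpa only [← Icc_add_one_left_eq_Ioc, zero_add] using
    sum_Ioc_consecutive f (Nat.zero_le a) hab

theorem sum_mul_const_add {ι R : Type*} [CommSemiring R] (s : Finset ι) (w C : ι → R) (c : R) :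
    ∑ i ∈ s, w i * (c + C i) = (∑ i ∈ s, w i) * c + ∑ i ∈ s, w i * C i := by
  simp only [mul_add, sum_add_distrib, sum_mul]

theorem add_div_add_le_div_of_div_le_add_div_add {K : Type*} [Field K] [LinearOrder K]
    [IsStrictOrderedRing K] {a b c d : K} (hb : 0 < b) (hd : 0 < d)
    (h : a / b ≤ (a + c) / (b + d)) : (a + c) / (b + d) ≤ c / d := by
  rw [div_le_div_iff₀ hb (add_pos hb hd)] at h
  rw [div_le_div_iff₀ (add_pos hb hd) hd]
  nlinarith

theorem stmt_14_general (k : ℕ) (P w : ℕ → ℝ)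
    (hP : ∀ j ∈ Icc 1 k, 0 < P j)
    (astar : ℕ) (hmem : astar ∈ Icc 1 k)
    (hmax : ∀ b ∈ Icc 1 k,
      (∑ j ∈ Icc 1 b, w j) / (∑ j ∈ Icc 1 b, P j) ≤
        (∑ j ∈ Icc 1 astar, w j) / (∑ j ∈ Icc 1 astar, P j))
    (m : ℕ) (hm : 1 ≤ m) (P' w' : ℕ → ℝ)
    (hP' : ∀ j ∈ Icc 1 m, 0 < P' j)
    (hB : (∑ j ∈ Icc 1 m, w' j) / (∑ j ∈ Icc 1 m, P' j) <
      (∑ j ∈ Icc 1 astar, w j) / (∑ j ∈ Icc 1 astar, P j))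
    (a : ℕ) (ha : 1 ≤ a) (haa : a < astar) :
    -- cost of the contiguous schedule (1,…,a*), then B
    ((∑ i ∈ Icc 1 astar, w i * ∑ j ∈ Icc 1 i, P j) +
        ∑ i ∈ Icc 1 m, w' i * ((∑ j ∈ Icc 1 astar, P j) + ∑ j ∈ Icc 1 i, P' j))
      <
    -- cost of the interleaved schedule (1,…,a), B, (a+1,…,a*)
    ((∑ i ∈ Icc 1 a, w i * ∑ j ∈ Icc 1 i, P j) +
        (∑ i ∈ Icc 1 m, w' i * ((∑ j ∈ Icc 1 a, P j) + ∑ j ∈ Icc 1 i, P' j)) +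
        ∑ i ∈ Icc (a + 1) astar, w i * ((∑ j ∈ Icc 1 m, P' j) + ∑ j ∈ Icc 1 i, P j)) := by
  have hk : astar ≤ k := (mem_Icc.1 hmem).2
  have hsplit (f : ℕ → ℝ) := (sum_Icc_one_add_sum_Icc_succ f haa.le).symm
  have hprefix := hmax a (mem_Icc.2 ⟨ha, haa.le.trans hk⟩)
  rw [hsplit w, hsplit P] at hprefix hB
  have hA : 0 < ∑ j ∈ Icc 1 a, P j :=
    sum_pos (fun j hj => hP j (Icc_subset_Icc_right (haa.le.trans hk) hj)) ⟨1, by simp [ha]⟩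
  have hC : 0 < ∑ j ∈ Icc (a + 1) astar, P j :=
    sum_pos (fun j hj => hP j (Icc_subset_Icc (by omega) hk hj)) ⟨astar, by simp [haa]⟩
  have hBpos : 0 < ∑ j ∈ Icc 1 m, P' j := sum_pos hP' ⟨1, by simp [hm]⟩
  have htail := add_div_add_le_div_of_div_le_add_div_add hA hC hprefix
  have hexchange := (div_lt_div_iff₀ hBpos hC).1 (hB.trans_le htail)
  rw [hsplit (fun i => w i * ∑ j ∈ Icc 1 i, P j), hsplit P]
  simp only [sum_mul_const_add, add_assoc]
  linarith

/-- For a chain `1 → ⋯ → k` whose ρ-factor `ρ` is (first) attained at job `a*`,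
interleaving a block `B` (jobs `1,…,m` of another chain, with block ratio
strictly less than `ρ`) between positions `a` and `a+1` of the prefix
(with `1 ≤ a < a*`) yields a total weighted completion time strictly greater
than processing the prefix `(1,…,a*)` contiguously before `B`. -/
theorem stmt_14 (k : ℕ) (hk : 1 ≤ k) (P w : ℕ → ℝ)
    (hP : ∀ j ∈ Icc 1 k, 0 < P j) (hw : ∀ j ∈ Icc 1 k, 0 < w j)
    (astar : ℕ) (hmem : astar ∈ Icc 1 k)
    (hmax : ∀ b ∈ Icc 1 k,
      (∑ j ∈ Icc 1 b, w j) / (∑ j ∈ Icc 1 b, P j) ≤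
        (∑ j ∈ Icc 1 astar, w j) / (∑ j ∈ Icc 1 astar, P j))
    (hleast : ∀ b ∈ Icc 1 k,
      (∑ j ∈ Icc 1 b, w j) / (∑ j ∈ Icc 1 b, P j) =
        (∑ j ∈ Icc 1 astar, w j) / (∑ j ∈ Icc 1 astar, P j) → astar ≤ b)
    (m : ℕ) (hm : 1 ≤ m) (P' w' : ℕ → ℝ)
    (hP' : ∀ j ∈ Icc 1 m, 0 < P' j) (hw' : ∀ j ∈ Icc 1 m, 0 < w' j)
    (hB : (∑ j ∈ Icc 1 m, w' j) / (∑ j ∈ Icc 1 m, P' j) <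
      (∑ j ∈ Icc 1 astar, w j) / (∑ j ∈ Icc 1 astar, P j))
    (a : ℕ) (ha : 1 ≤ a) (haa : a < astar) :
    -- cost of the contiguous schedule (1,…,a*), then B
    ((∑ i ∈ Icc 1 astar, w i * ∑ j ∈ Icc 1 i, P j) +
        ∑ i ∈ Icc 1 m, w' i * ((∑ j ∈ Icc 1 astar, P j) + ∑ j ∈ Icc 1 i, P' j))
      <
    -- cost of the interleaved schedule (1,…,a), B, (a+1,…,a*)
    ((∑ i ∈ Icc 1 a, w i * ∑ j ∈ Icc 1 i, P j) +
        (∑ i ∈ Icc 1 m, w' i * ((∑ j ∈ Icc 1 a, P j) + ∑ j ∈ Icc 1 i, P' j)) +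
        ∑ i ∈ Icc (a + 1) astar, w i * ((∑ j ∈ Icc 1 m, P' j) + ∑ j ∈ Icc 1 i, P j)) :=
  stmt_14_general k P w hP astar hmem hmax m hm P' w' hP' hB a ha haa
end
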